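/- For any $t > 0$ and $c > 0$: $\int_0^\infty \left| \frac{1}{\sqrt{s}} - \frac{\mathbf{1}_{\{s>t\}}}{\sqrt{s-t}} \right| \frac{e^{-c\sqrt{t/s}}}{\sqrt{s}}\, ds \leq C_c$, where $C_c$ depends only on $c > 0$ and not on $t$. -/

import Mathlib

open MeasureTheory Set

lemma sq_le_four_exp {x : ℝ} (hx : 0 ≤ x) : x ^ 2 ≤ 4 * Real.exp x := by
  have h1 : x / 2 + 1 ≤ Real.exp (x / 2) := Real.add_one_le_exp _
  have h2 : Real.exp (x / 2) * Real.exp (x / 2) = Real.exp x := by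
    rw [← Real.exp_add]; ring_nf
  nlinarith [Real.exp_pos (x / 2)]

lemma integral_inv_sqrt_sub (t : ℝ) (ht : 0 < t) :
    ∫ s in Set.Ioc t (2 * t), (Real.sqrt (s - t))⁻¹ = 2 * Real.sqrt t := by
  rw [← intervalIntegral.integral_of_le (by linarith)]
  have := intervalIntegral.integral_comp_sub_right (a := t) (b := 2*t)
    (fun u => (Real.sqrt u)⁻¹) t
  rw [this]
  have h2 : (2 * t - t) = t := by ring
  have h3 : (t - t) = 0 := by ring
  rw [h2, h3]
  have heq : ∀ u ∈ Set.uIcc (0:ℝ) t, (Real.sqrt u)⁻¹ = u ^ (-(1/2) : ℝ) := by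
    intro u hu
    rw [Set.uIcc_of_le ht.le] at hu
    rw [Real.rpow_neg hu.1, Real.sqrt_eq_rpow]
  rw [intervalIntegral.integral_congr heq, integral_rpow (Or.inl (by norm_num))]
  rw [Real.sqrt_eq_rpow]
  rw [Real.zero_rpow (by norm_num)]
  ring_nf

lemma integrableOn_inv_sqrt_sub (t : ℝ) (ht : 0 < t) :
    IntegrableOn (fun s => (Real.sqrt (s - t))⁻¹) (Set.Ioc t (2 * t)) := by
  have h : IntervalIntegrable (fun u : ℝ => u ^ (-(1/2):ℝ)) volume 0 t :=
    intervalIntegral.intervalIntegrable_rpow' (by norm_num)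
  have h2 := h.comp_sub_right t
  rw [zero_add] at h2
  rw [intervalIntegrable_iff_integrableOn_Ioc_of_le (by linarith)] at h2
  have h3 : t + t = 2 * t := by ring
  rw [h3] at h2
  refine h2.congr_fun (fun s hs => ?_) measurableSet_Ioc
  have : (0:ℝ) ≤ s - t := by simp at hs; linarith [hs.1]
  beta_reduce
  rw [Real.rpow_neg this, Real.sqrt_eq_rpow]

lemma integrableOn_inv_sq (a : ℝ) (ha : 0 < a) :
    IntegrableOn (fun s : ℝ => (s ^ 2)⁻¹) (Set.Ioi a) ∧
    ∫ s in Set.Ioi a, (s ^ 2)⁻¹ = a⁻¹ := by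
  have hint := integrableOn_Ioi_rpow_of_lt (a := (-2:ℝ)) (by norm_num) ha
  have hval := integral_Ioi_rpow_of_lt (a := (-2:ℝ)) (by norm_num) ha
  have hcong : ∀ s ∈ Set.Ioi a, s ^ (-2:ℝ) = (s ^ 2)⁻¹ := by
    intro s hs
    have hs0 : 0 < s := ha.trans hs
    rw [show (-2:ℝ) = -(2:ℕ) by norm_num, Real.rpow_neg hs0.le, Real.rpow_natCast]
  constructor
  · exact hint.congr_fun hcong measurableSet_Ioi
  · rw [← setIntegral_congr_fun measurableSet_Ioi hcong, hval]
    rw [show (-2:ℝ) + 1 = -1 by norm_num, Real.rpow_neg_one]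
    field_simp

theorem riesz_kernel_time_integral_bound (c : ℝ) (hc : 0 < c) :
    ∃ C > (0 : ℝ), ∀ t : ℝ, 0 < t →
      (∫⁻ s in Set.Ioi (0 : ℝ),
          ENNReal.ofReal
            (|1 / Real.sqrt s - (if t < s then 1 / Real.sqrt (s - t) else 0)| *
              Real.exp (-c * Real.sqrt (t / s)) / Real.sqrt s))
        ≤ ENNReal.ofReal C := by
  refine ⟨4 / c ^ 2 + 3, by positivity, fun t ht => ?_⟩
  have hsplit : Set.Ioi (0:ℝ) = Set.Ioc 0 t ∪ Set.Ioi t :=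
    (Set.Ioc_union_Ioi_eq_Ioi ht.le).symm
  have hsplit2 : Set.Ioi t = Set.Ioc t (2*t) ∪ Set.Ioi (2*t) :=
    (Set.Ioc_union_Ioi_eq_Ioi (by linarith)).symm
  rw [hsplit, lintegral_union measurableSet_Ioi (Set.Ioc_disjoint_Ioi le_rfl),
      hsplit2, lintegral_union measurableSet_Ioi (Set.Ioc_disjoint_Ioi le_rfl)]
  have hA : (∫⁻ s in Set.Ioc 0 t,
      ENNReal.ofReal (|1 / Real.sqrt s - (if t < s then 1 / Real.sqrt (s - t) else 0)| *
        Real.exp (-c * Real.sqrt (t / s)) / Real.sqrt s)) ≤ ENNReal.ofReal (4 / c ^ 2) := by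
    have hb : ∀ s ∈ Set.Ioc 0 t,
        ENNReal.ofReal (|1 / Real.sqrt s - (if t < s then 1 / Real.sqrt (s - t) else 0)| *
          Real.exp (-c * Real.sqrt (t / s)) / Real.sqrt s)
          ≤ ENNReal.ofReal (4 / (c ^ 2 * t)) := by
      intro s hs
      obtain ⟨hs0, hst⟩ := hs
      rw [if_neg (not_lt.mpr hst)]
      apply ENNReal.ofReal_le_ofReal
      have hts : 0 < t / s := div_pos ht hs0
      have hx : 0 ≤ c * Real.sqrt (t / s) := by positivity
      have hE : Real.exp (-(c * Real.sqrt (t / s))) ≤ 4 * s / (c ^ 2 * t) := by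
        have h2 := sq_le_four_exp hx
        have h3 : (c * Real.sqrt (t / s)) ^ 2 = c ^ 2 * (t / s) := by
          rw [mul_pow, Real.sq_sqrt hts.le]
        rw [h3] at h2
        rw [Real.exp_neg, inv_eq_one_div, div_le_div_iff₀ (Real.exp_pos _) (by positivity)]
        have h4 : c ^ 2 * t ≤ 4 * s * Real.exp (c * Real.sqrt (t / s)) := by
          have h5 := mul_le_mul_of_nonneg_right h2 hs0.le
          calc c ^ 2 * t = c ^ 2 * (t / s) * s := by field_simp
            _ ≤ 4 * Real.exp (c * Real.sqrt (t / s)) * s := h5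
            _ = 4 * s * Real.exp (c * Real.sqrt (t / s)) := by ring
        linarith
      have hss : Real.sqrt s * Real.sqrt s = s := Real.mul_self_sqrt hs0.le
      have hsq0 : (0:ℝ) < Real.sqrt s := Real.sqrt_pos.mpr hs0
      have h5 : |1 / Real.sqrt s - 0| * Real.exp (-c * Real.sqrt (t / s)) / Real.sqrt s
          = Real.exp (-(c * Real.sqrt (t / s))) / s := by
        rw [sub_zero, abs_of_nonneg (by positivity : (0:ℝ) ≤ 1 / Real.sqrt s), neg_mul, ← hss]
        field_simp
        rw [Real.sqrt_sq hsq0.le]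
      rw [h5]
      calc Real.exp (-(c * Real.sqrt (t / s))) / s ≤ (4 * s / (c ^ 2 * t)) / s := by gcongr
        _ = 4 / (c ^ 2 * t) := by field_simp
    calc (∫⁻ s in Set.Ioc 0 t,
        ENNReal.ofReal (|1 / Real.sqrt s - (if t < s then 1 / Real.sqrt (s - t) else 0)| *
          Real.exp (-c * Real.sqrt (t / s)) / Real.sqrt s))
        ≤ ∫⁻ _ in Set.Ioc 0 t, ENNReal.ofReal (4 / (c ^ 2 * t)) :=
          setLIntegral_mono measurable_const hb
      _ = ENNReal.ofReal (4 / (c ^ 2 * t)) * volume (Set.Ioc 0 t) := setLIntegral_const _ _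
      _ = ENNReal.ofReal (4 / (c ^ 2 * t)) * ENNReal.ofReal t := by
          rw [Real.volume_Ioc, sub_zero]
      _ = ENNReal.ofReal (4 / (c ^ 2 * t) * t) := by
          rw [ENNReal.ofReal_mul (by positivity)]
      _ = ENNReal.ofReal (4 / c ^ 2) := by
          congr 1; field_simp
  have hB : (∫⁻ s in Set.Ioc t (2*t),
      ENNReal.ofReal (|1 / Real.sqrt s - (if t < s then 1 / Real.sqrt (s - t) else 0)| *
        Real.exp (-c * Real.sqrt (t / s)) / Real.sqrt s)) ≤ ENNReal.ofReal 2 := by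
    have hb : ∀ s ∈ Set.Ioc t (2*t),
        ENNReal.ofReal (|1 / Real.sqrt s - (if t < s then 1 / Real.sqrt (s - t) else 0)| *
          Real.exp (-c * Real.sqrt (t / s)) / Real.sqrt s)
          ≤ ENNReal.ofReal ((Real.sqrt t)⁻¹ * (Real.sqrt (s - t))⁻¹) := by
      intro s hs
      obtain ⟨hts, hs2⟩ := hs
      rw [if_pos hts]
      apply ENNReal.ofReal_le_ofReal
      have hs0 : 0 < s := ht.trans hts
      have hst0 : 0 < s - t := by linarith
      have hb0 : 0 < Real.sqrt (s - t) := Real.sqrt_pos.mpr hst0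
      have ha0 : 0 < Real.sqrt s := Real.sqrt_pos.mpr hs0
      have ht0 : 0 < Real.sqrt t := Real.sqrt_pos.mpr ht
      have hba : Real.sqrt (s - t) ≤ Real.sqrt s := Real.sqrt_le_sqrt (by linarith)
      have htsq : Real.sqrt t ≤ Real.sqrt s := Real.sqrt_le_sqrt hts.le
      have hinv : 1 / Real.sqrt s ≤ 1 / Real.sqrt (s - t) :=
        one_div_le_one_div_of_le hb0 hba
      have habs : |1 / Real.sqrt s - 1 / Real.sqrt (s - t)| ≤ (Real.sqrt (s - t))⁻¹ := by
        rw [abs_sub_comm, abs_of_nonneg (by linarith)]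
        have h1 : (0:ℝ) ≤ 1 / Real.sqrt s := by positivity
        rw [one_div] at hinv ⊢
        linarith
      have hexp : Real.exp (-c * Real.sqrt (t / s)) ≤ 1 := by
        apply Real.exp_le_one_iff.mpr
        have : (0:ℝ) ≤ c * Real.sqrt (t / s) := by positivity
        linarith
      calc |1 / Real.sqrt s - 1 / Real.sqrt (s - t)| * Real.exp (-c * Real.sqrt (t / s))
            / Real.sqrt s
          ≤ (Real.sqrt (s - t))⁻¹ * 1 / Real.sqrt t := by gcongr
        _ = (Real.sqrt t)⁻¹ * (Real.sqrt (s - t))⁻¹ := by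
            rw [mul_one, div_eq_mul_inv, mul_comm]
    have hint : IntegrableOn (fun s => (Real.sqrt t)⁻¹ * (Real.sqrt (s - t))⁻¹)
        (Set.Ioc t (2*t)) := (integrableOn_inv_sqrt_sub t ht).const_mul _
    calc (∫⁻ s in Set.Ioc t (2*t),
        ENNReal.ofReal (|1 / Real.sqrt s - (if t < s then 1 / Real.sqrt (s - t) else 0)| *
          Real.exp (-c * Real.sqrt (t / s)) / Real.sqrt s))
        ≤ ∫⁻ s in Set.Ioc t (2*t),
            ENNReal.ofReal ((Real.sqrt t)⁻¹ * (Real.sqrt (s - t))⁻¹) :=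
          setLIntegral_mono (by fun_prop) hb
      _ = ENNReal.ofReal (∫ s in Set.Ioc t (2*t), (Real.sqrt t)⁻¹ * (Real.sqrt (s - t))⁻¹) :=
          (ofReal_integral_eq_lintegral_ofReal hint
            (Filter.Eventually.of_forall fun s => by positivity)).symm
      _ = ENNReal.ofReal 2 := by
          rw [MeasureTheory.integral_const_mul, integral_inv_sqrt_sub t ht]
          congr 1
          have : Real.sqrt t ≠ 0 := ne_of_gt (Real.sqrt_pos.mpr ht)
          field_simp
  have hC : (∫⁻ s in Set.Ioi (2*t),
      ENNReal.ofReal (|1 / Real.sqrt s - (if t < s then 1 / Real.sqrt (s - t) else 0)| *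
        Real.exp (-c * Real.sqrt (t / s)) / Real.sqrt s)) ≤ ENNReal.ofReal 1 := by
    have hb : ∀ s ∈ Set.Ioi (2*t),
        ENNReal.ofReal (|1 / Real.sqrt s - (if t < s then 1 / Real.sqrt (s - t) else 0)| *
          Real.exp (-c * Real.sqrt (t / s)) / Real.sqrt s)
          ≤ ENNReal.ofReal (2 * t * (s ^ 2)⁻¹) := by
      intro s hs
      simp only [Set.mem_Ioi] at hs
      have hts : t < s := by linarith
      rw [if_pos hts]
      apply ENNReal.ofReal_le_ofReal
      have hs0 : 0 < s := by linarith
      have hst0 : 0 < s - t := by linarith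
      set a := Real.sqrt s with ha
      set b := Real.sqrt (s - t) with hbdef
      have hb0 : 0 < b := Real.sqrt_pos.mpr hst0
      have ha0 : 0 < a := Real.sqrt_pos.mpr hs0
      have hba : b ≤ a := Real.sqrt_le_sqrt (by linarith)
      have ha2 : a * a = s := Real.mul_self_sqrt hs0.le
      have hb2 : b * b = s - t := Real.mul_self_sqrt hst0.le
      have hinv : 1 / a ≤ 1 / b := one_div_le_one_div_of_le hb0 hba
      have hexp : Real.exp (-c * Real.sqrt (t / s)) ≤ 1 := by
        apply Real.exp_le_one_iff.mpr
        have : (0:ℝ) ≤ c * Real.sqrt (t / s) := by positivity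
        linarith
      have h1 : a - b ≤ t / a := by
        rw [le_div_iff₀ ha0]
        nlinarith [mul_le_mul_of_nonneg_left hba hb0.le]
      have hdiff : 1 / b - 1 / a = (a - b) / (b * a) := by
        rw [div_sub_div _ _ hb0.ne' ha0.ne', one_mul, mul_one]
      have habs : |1 / a - 1 / b| = 1 / b - 1 / a := by
        rw [abs_sub_comm, abs_of_nonneg (by linarith)]
      have hb2' : s / 2 ≤ b * b := by rw [hb2]; linarith
      calc |1 / a - 1 / b| * Real.exp (-c * Real.sqrt (t / s)) / a
          ≤ (1 / b - 1 / a) * 1 / a := by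
            rw [habs]; gcongr
        _ = (a - b) / (b * s) := by
            rw [mul_one, hdiff, div_div, mul_assoc, ha2]
        _ ≤ (t / a) / (b * s) := by gcongr
        _ = t / (a * (b * s)) := by rw [div_div]
        _ ≤ t / (b * (b * s)) := by gcongr
        _ = t / (b * b * s) := by rw [mul_assoc]
        _ ≤ t / ((s / 2) * s) := by gcongr
        _ = 2 * t * (s ^ 2)⁻¹ := by field_simp
    have hint : IntegrableOn (fun s : ℝ => 2 * t * (s ^ 2)⁻¹) (Set.Ioi (2 * t)) :=
      (integrableOn_inv_sq (2 * t) (by linarith)).1.const_mul _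
    calc (∫⁻ s in Set.Ioi (2*t),
        ENNReal.ofReal (|1 / Real.sqrt s - (if t < s then 1 / Real.sqrt (s - t) else 0)| *
          Real.exp (-c * Real.sqrt (t / s)) / Real.sqrt s))
        ≤ ∫⁻ s in Set.Ioi (2*t), ENNReal.ofReal (2 * t * (s ^ 2)⁻¹) :=
          setLIntegral_mono (by fun_prop) hb
      _ = ENNReal.ofReal (∫ s in Set.Ioi (2*t), 2 * t * (s ^ 2)⁻¹) :=
          (ofReal_integral_eq_lintegral_ofReal hint
            (Filter.Eventually.of_forall fun s => by positivity)).symm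
      _ = ENNReal.ofReal 1 := by
          rw [MeasureTheory.integral_const_mul, (integrableOn_inv_sq (2 * t) (by linarith)).2]
          congr 1
          field_simp
  calc (∫⁻ s in Set.Ioc 0 t,
        ENNReal.ofReal (|1 / Real.sqrt s - (if t < s then 1 / Real.sqrt (s - t) else 0)| *
          Real.exp (-c * Real.sqrt (t / s)) / Real.sqrt s))
      + ((∫⁻ s in Set.Ioc t (2*t),
        ENNReal.ofReal (|1 / Real.sqrt s - (if t < s then 1 / Real.sqrt (s - t) else 0)| *
          Real.exp (-c * Real.sqrt (t / s)) / Real.sqrt s))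
      + (∫⁻ s in Set.Ioi (2*t),
        ENNReal.ofReal (|1 / Real.sqrt s - (if t < s then 1 / Real.sqrt (s - t) else 0)| *
          Real.exp (-c * Real.sqrt (t / s)) / Real.sqrt s)))
      ≤ ENNReal.ofReal (4 / c ^ 2) + (ENNReal.ofReal 2 + ENNReal.ofReal 1) :=
        add_le_add hA (add_le_add hB hC)
    _ = ENNReal.ofReal (4 / c ^ 2 + 3) := by
        rw [← ENNReal.ofReal_add (by norm_num) (by norm_num),
          ← ENNReal.ofReal_add (by positivity) (by norm_num)]
        norm_num
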